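/- arXiv:1502.04076 — 3 statements merged into one kernel-verified Lean document; each statement's English description precedes it below -/
import Mathlib

section
/- Define Par(n,k) ∈ ZMod 2 by the recurrence Par(n,k) = k·Par(n-1,k) + Par(n-1,k-1) + S(n-2,k-2) (mod 2), with initial conditions Par(n,2) = 0 for all n, and Par(n,n-1) = 1 if n ≡ 0 (mod 4) and 0 otherwise. Then for all n ≥ 4 and 2 ≤ k < n: Par(n,k) = 0 if n is odd, and Par(n,k) ≡ S(n-2,k-2) (mod 2) if n is even. -/
/-!
Strong induction on `n`, with `Par n k` compared against `if Even n then S(n-2, k-2) else 0`.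
The column `k = 2` is trivial and the diagonal `k = n - 1` is the parity of
`S(m+1, m) = (m+1).choose 2`, which has period 4 in `m`. Inside, the recurrence for even `n`
only sees the vanishing odd row `n - 1`; for odd `n` it reads
`k S(n-3, k-2) + S(n-3, k-3) + S(n-2, k-2)`, and since `k ≡ k - 2` the first two terms are
`S(n-2, k-2)` again, so the sum vanishes mod 2.
-/

def stirling : ℕ → ℕ → ℕ
  | 0, 0 => 1
  | 0, _ + 1 => 0
  | _ + 1, 0 => 0
  | n + 1, k + 1 => (k + 1) * stirling n (k + 1) + stirling n k

open Nat

theorem stirling_eq_stirlingSecond : stirling = stirlingSecond := by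
  funext n k
  induction n generalizing k with
  | zero => cases k <;> rfl
  | succ n ih => cases k <;> simp only [stirling, stirlingSecond, ih]

theorem Nat.choose_two_mod_two (m : ℕ) :
    m.choose 2 % 2 = if m % 4 = 2 ∨ m % 4 = 3 then 1 else 0 := by
  induction m with
  | zero => rfl
  | succ m ih =>
    have h : (m + 1).choose 2 = m + m.choose 2 := by simp [choose_succ_succ']
    split_ifs at ih ⊢ <;> omega

theorem Nat.cast_stirlingSecond_succ_self_left_zmod_two (m : ℕ) :
    (stirlingSecond (m + 1) m : ZMod 2) = if m % 4 = 1 ∨ m % 4 = 2 then 1 else 0 := by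
  rw [← ZMod.natCast_mod, stirlingSecond_succ_self_left, choose_two_mod_two]
  split_ifs <;> first | rfl | omega

theorem par_eq_ite (Par : ℕ → ℕ → ZMod 2)
    (hrec : ∀ n k : ℕ, 4 ≤ n → 3 ≤ k → k < n →
      Par n k = (k : ZMod 2) * Par (n - 1) k + Par (n - 1) (k - 1)
        + (stirlingSecond (n - 2) (k - 2) : ZMod 2))
    (h2 : ∀ n : ℕ, Par n 2 = 0)
    (hinit : ∀ n : ℕ, Par n (n - 1) = if n % 4 = 0 then 1 else 0) :
    ∀ n k : ℕ, 4 ≤ n → 2 ≤ k → k < n →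
      Par n k = if Even n then (stirlingSecond (n - 2) (k - 2) : ZMod 2) else 0 := by
  intro n
  induction n using Nat.strong_induction_on with
  | _ n ih =>
  intro k hn hk hkn
  obtain rfl | rfl | ⟨hk3, hkn'⟩ : k = 2 ∨ k = n - 1 ∨ 3 ≤ k ∧ k + 2 ≤ n := by omega
  · obtain ⟨m, rfl⟩ : ∃ m, n = m + 3 := ⟨n - 3, by omega⟩
    simp [h2]
  · obtain ⟨m, rfl⟩ : ∃ m, n = m + 3 := ⟨n - 3, by omega⟩
    rw [hinit]
    simp only [Nat.reduceSubDiff]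
    by_cases he : Even (m + 3)
    · have hmod := Nat.even_iff.mp he
      rw [if_pos he, cast_stirlingSecond_succ_self_left_zmod_two]
      exact if_congr (by omega) rfl rfl
    · have hmod := Nat.not_even_iff.mp he
      rw [if_neg he, if_neg (by omega)]
  · obtain ⟨m, rfl⟩ : ∃ m, n = m + 4 := ⟨n - 4, by omega⟩
    obtain ⟨j, rfl⟩ : ∃ j, k = j + 3 := ⟨k - 3, by omega⟩
    have hS : (stirlingSecond (m + 2) (j + 1) : ZMod 2)
        = (j + 3 : ZMod 2) * stirlingSecond (m + 1) (j + 1) + stirlingSecond (m + 1) j := by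
      rw [stirlingSecond_succ_succ]
      push_cast
      reduce_mod_char
    rw [hrec _ _ hn hk3 hkn]
    simp only [Nat.reduceSubDiff]
    rw [ih (m + 3) (by omega) (j + 3) (by omega) (by omega) (by omega),
      ih (m + 3) (by omega) (j + 2) (by omega) (by omega) (by omega)]
    simp only [Nat.reduceSubDiff]
    have hpar : Even (m + 4) ↔ ¬Even (m + 3) := Nat.even_add_one
    by_cases he : Even (m + 3)
    · simp only [hpar, he, not_true_eq_false, if_true, if_false, cast_add, cast_ofNat]
      rw [← hS, CharTwo.add_self_eq_zero]
    · simp only [hpar, he, not_false_eq_true, if_true, if_false]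
      ring

theorem par_formula (Par : ℕ → ℕ → ZMod 2)
    (hrec : ∀ n k : ℕ, 4 ≤ n → 3 ≤ k → k < n →
      Par n k = (k : ZMod 2) * Par (n - 1) k + Par (n - 1) (k - 1)
        + (stirling (n - 2) (k - 2) : ZMod 2))
    (h2 : ∀ n : ℕ, Par n 2 = 0)
    (hinit : ∀ n : ℕ, Par n (n - 1) = if n % 4 = 0 then 1 else 0) :
    ∀ n k : ℕ, 4 ≤ n → 2 ≤ k → k < n →
      (Odd n → Par n k = 0) ∧
      (Even n → Par n k = (stirling (n - 2) (k - 2) : ZMod 2)) := by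
  rw [stirling_eq_stirlingSecond] at hrec ⊢
  intro n k hn hk hkn
  rw [par_eq_ite Par hrec h2 hinit n k hn hk hkn]
  exact ⟨fun ho => if_neg (Nat.not_even_iff_odd.mpr ho), fun he => if_pos he⟩
end

section
/- For n balls thrown independently and uniformly into k ≥ 3 boxes, the probability that some two boxes receive the same number of balls is at most C(k,2) · ((k-2)/k)^n · ∑_{j=0}^{⌊n/2⌋} C(n,j)·C(n-j,j)/(k-2)^(2j). -/
/-!
Fix two boxes `i ≠ j`. A function with `f⁻¹ i = A` and `f⁻¹ j = B` (disjoint, both of size `m`)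
is a free choice of one of the other `k - 2` boxes at each of the `n - 2m` remaining balls, and
there are `C(n, m) C(n - m, m)` such pairs `(A, B)`. Hence exactly
`∑ₘ C(n, m) C(n - m, m) (k - 2)^(n - 2m)` functions give `i` and `j` equally many balls; a union
bound over the `C(k, 2)` pairs `i < j` and division by `kⁿ` give the claim.
-/

open Finset

variable {α β : Type*} [Fintype α] [DecidableEq α] [Fintype β] [DecidableEq β]

theorem card_fun_fiber_eq_and_fiber_eq {i j : β} (hij : i ≠ j) {A B : Finset α}
    (hAB : Disjoint A B) :
    #{f : α → β | univ.filter (f · = i) = A ∧ univ.filter (f · = j) = B} =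
      (Fintype.card β - 2) ^ #(A ∪ B)ᶜ := by
  have hpi : ({f : α → β | univ.filter (f · = i) = A ∧ univ.filter (f · = j) = B} :
      Finset (α → β)) =
        Fintype.piFinset fun x => if x ∈ A then {i} else if x ∈ B then {j} else {i, j}ᶜ := by
    ext f
    simp only [mem_filter, mem_univ, true_and, Fintype.mem_piFinset, Finset.ext_iff]
    constructor
    · rintro ⟨hA, hB⟩ x
      split_ifs <;> simp_all
    · intro h
      refine ⟨fun x => ?_, fun x => ?_⟩ <;> specialize h x <;>
        split_ifs at h <;> simp_all [disjoint_left.mp hAB, eq_comm]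
  have hcard (x : α) :
      #(if x ∈ A then {i} else if x ∈ B then {j} else ({i, j}ᶜ : Finset β)) =
        if x ∈ (A ∪ B)ᶜ then Fintype.card β - 2 else 1 := by
    by_cases hxA : x ∈ A
    · simp [hxA]
    by_cases hxB : x ∈ B
    · simp [hxA, hxB]
    · rw [if_neg hxA, if_neg hxB, if_pos (by simp [hxA, hxB]), card_compl, card_pair hij]
  rw [hpi, Fintype.card_piFinset, prod_congr rfl fun x _ => hcard x, Fintype.prod_ite_mem,
    prod_const]

theorem card_sigma_powersetCard_powersetCard_compl (m : ℕ) :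
    #((powersetCard m (univ : Finset α)).sigma fun A => powersetCard m Aᶜ) =
      (Fintype.card α).choose m * (Fintype.card α - m).choose m := by
  rw [Finset.card_sigma, sum_congr rfl fun A hA => by
    rw [card_powersetCard, card_compl, mem_powersetCard_univ.mp hA]]
  rw [sum_const, card_powersetCard, card_univ, smul_eq_mul]

theorem card_fun_card_fiber_eq_and_card_fiber_eq {i j : β} (hij : i ≠ j) (m : ℕ) :
    #{f : α → β | #{x | f x = i} = m ∧ #{x | f x = j} = m} =
      (Fintype.card α).choose m * (Fintype.card α - m).choose m *
        (Fintype.card β - 2) ^ (Fintype.card α - 2 * m) := by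
  set S : Finset (α → β) := {f | #{x | f x = i} = m ∧ #{x | f x = j} = m}
  set P := (powersetCard m (univ : Finset α)).sigma fun A => powersetCard m Aᶜ
  let fibers : (α → β) → Σ _ : Finset α, Finset α := fun f =>
    ⟨univ.filter (f · = i), univ.filter (f · = j)⟩
  have hmaps : ∀ f ∈ S, fibers f ∈ P := by
    intro f hf
    simp only [S, mem_filter, mem_univ, true_and] at hf
    simp only [P, fibers, mem_sigma, mem_powersetCard, subset_univ, true_and, hf]
    simp only [subset_iff, mem_compl, mem_filter, mem_univ, true_and, and_true]
    exact fun x hj hi => hij (hi ▸ hj)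
  have hfiber : ∀ p ∈ P,
      #{f ∈ S | fibers f = p} = (Fintype.card β - 2) ^ (Fintype.card α - 2 * m) := by
    rintro ⟨A, B⟩ hp
    simp only [P, mem_sigma, mem_powersetCard, subset_univ, true_and] at hp
    obtain ⟨hA, hBA, hB⟩ := hp
    have hAB : Disjoint A B := disjoint_of_subset_right hBA disjoint_compl_right
    have hS : ({f ∈ S | fibers f = ⟨A, B⟩} : Finset (α → β)) =
        ({f : α → β | univ.filter (f · = i) = A ∧ univ.filter (f · = j) = B} :
          Finset (α → β)) := by
      ext f
      simp only [S, fibers, mem_filter, mem_univ, true_and, Sigma.mk.injEq, heq_eq_eq]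
      constructor
      · exact And.right
      · rintro ⟨rfl, rfl⟩
        exact ⟨⟨hA, hB⟩, rfl, rfl⟩
    rw [hS, card_fun_fiber_eq_and_fiber_eq hij hAB, card_compl, card_union_of_disjoint hAB,
      hA, hB, two_mul]
  rw [card_eq_sum_card_fiberwise hmaps, sum_congr rfl hfiber, sum_const,
    card_sigma_powersetCard_powersetCard_compl, smul_eq_mul]

theorem card_fun_card_fiber_eq_card_fiber {i j : β} (hij : i ≠ j) :
    #{f : α → β | #{x | f x = i} = #{x | f x = j}} =
      ∑ m ∈ range (Fintype.card α / 2 + 1),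
        (Fintype.card α).choose m * (Fintype.card α - m).choose m *
          (Fintype.card β - 2) ^ (Fintype.card α - 2 * m) := by
  have hmaps : ∀ f ∈ ({f : α → β | #{x | f x = i} = #{x | f x = j}} : Finset (α → β)),
      #{x | f x = i} ∈ range (Fintype.card α / 2 + 1) := by
    intro f hf
    have hdisj : Disjoint (univ.filter (f · = i)) (univ.filter (f · = j)) :=
      disjoint_filter.2 fun x _ hi hj => hij (hi ▸ hj)
    have hle := card_union_of_disjoint hdisj ▸ card_le_univ (_ ∪ _)
    rw [(mem_filter.mp hf).2] at hle ⊢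
    rw [mem_range]
    omega
  rw [card_eq_sum_card_fiberwise hmaps]
  refine sum_congr rfl fun m _ => ?_
  rw [filter_filter, ← card_fun_card_fiber_eq_and_card_fiber_eq hij m]
  congr 1
  ext f
  simp only [mem_filter, mem_univ, true_and]
  constructor
  · rintro ⟨h, rfl⟩
    exact ⟨rfl, h.symm⟩
  · rintro ⟨hi, hj⟩
    exact ⟨hi.trans hj.symm, hi⟩

theorem card_fun_exists_card_fiber_eq_le [LinearOrder β] :
    #{f : α → β | ∃ i j, i ≠ j ∧ #{x | f x = i} = #{x | f x = j}} ≤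
      (Fintype.card β).choose 2 * ∑ m ∈ range (Fintype.card α / 2 + 1),
        (Fintype.card α).choose m * (Fintype.card α - m).choose m *
          (Fintype.card β - 2) ^ (Fintype.card α - 2 * m) := by
  calc _ ≤ #(({p : β × β | p.1 < p.2} : Finset (β × β)).biUnion fun p =>
          ({f : α → β | #{x | f x = p.1} = #{x | f x = p.2}} : Finset (α → β))) := by
        refine card_le_card fun f hf => ?_
        obtain ⟨i, j, hij, h⟩ := (mem_filter.mp hf).2
        simp only [mem_biUnion, mem_filter, mem_univ, true_and, Prod.exists]
        rcases hij.lt_or_gt with hlt | hlt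
        exacts [⟨i, j, hlt, h⟩, ⟨j, i, hlt, h.symm⟩]
    _ ≤ ∑ p ∈ ({p : β × β | p.1 < p.2} : Finset (β × β)),
          #{f : α → β | #{x | f x = p.1} = #{x | f x = p.2}} := card_biUnion_le
    _ = _ := by
        rw [sum_congr rfl fun p hp => card_fun_card_fiber_eq_card_fiber (mem_filter.mp hp).2.ne,
          sum_const, Fintype.card_product_filter_lt, smul_eq_mul]

theorem prob_two_boxes_equal (n k : ℕ) (hk : 3 ≤ k) :
    ((Finset.univ.filter (fun f : Fin n → Fin k => ∃ i j : Fin k, i ≠ j ∧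
        (Finset.univ.filter (fun x : Fin n => f x = i)).card =
          (Finset.univ.filter (fun x : Fin n => f x = j)).card)).card : ℚ) / (k : ℚ) ^ n ≤
      (k.choose 2 : ℚ) * (((k : ℚ) - 2) / (k : ℚ)) ^ n *
        ∑ j ∈ Finset.range (n / 2 + 1),
          ((n.choose j * (n - j).choose j : ℕ) : ℚ) / ((k : ℚ) - 2) ^ (2 * j) := by
  have hcount := card_fun_exists_card_fiber_eq_le (α := Fin n) (β := Fin k)
  rw [Fintype.card_fin, Fintype.card_fin] at hcount
  have hk2 : ((k - 2 : ℕ) : ℚ) = (k : ℚ) - 2 := by rw [Nat.cast_sub (by omega)]; norm_num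
  have hk2ne : (k : ℚ) - 2 ≠ 0 := by rw [← hk2]; exact_mod_cast (by omega : k - 2 ≠ 0)
  calc _ ≤ ((k.choose 2 * ∑ m ∈ range (n / 2 + 1),
          n.choose m * (n - m).choose m * (k - 2) ^ (n - 2 * m) : ℕ) : ℚ) / (k : ℚ) ^ n := by
        gcongr
        exact_mod_cast hcount
    _ = _ := by
        rw [Nat.cast_mul, mul_div_assoc, mul_assoc, Nat.cast_sum, sum_div,
          mul_sum _ _ ((((k : ℚ) - 2) / k) ^ n)]
        congr 1
        refine sum_congr rfl fun m hm => ?_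
        have h2m : 2 * m ≤ n := by rw [mem_range] at hm; omega
        push_cast [hk2, pow_sub₀ _ hk2ne h2m, div_pow]
        ring
end

section
/- For fixed k ≥ 3, and φ(n) = √(n·ψ(n)) with ψ(n) → ∞ and φ(n) = o(n), the quantity (1 + kφ(n)/n)^(−2n/k − 2φ(n)) · (1 − (2k/(k−2))·φ(n)/n)^(−n + 2n/k + 2φ(n)) tends to 0 as n → ∞. -/
/-!
With `c = 2k/(k-2)` the second exponent equals `-(2n/c)·(1 - cφ/n)`, so the bound
`log u ≥ 1 - 1/u` turns the second factor's logarithm into exactly `2φ`, while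
`log (1 + t) ≥ 2t/(t + 2)` bounds the first one by `-4φ(n + kφ)/(2n + kφ)`. The first-order
terms cancel and the logarithm of the expression is at most `-2kφ²/(2n + kφ)`, which is
`≤ -2φ²/n = -2ψ(n)` once `4kφ ≤ n`; hence the expression tends to `0`.
-/

open Filter Real

lemma log_one_add_mul_le {k n y : ℝ} (hk : 0 < k) (hn : 0 < n) (hy : 0 ≤ y) :
    log (1 + k * y / n) * (-(2 * n / k) - 2 * y) ≤ -(4 * y * (n + k * y) / (2 * n + k * y)) := by
  have hexp : -(2 * n / k) - 2 * y ≤ 0 := by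
    have : 0 ≤ 2 * n / k := by positivity
    linarith
  calc _ ≤ 2 * (k * y / n) / (k * y / n + 2) * (-(2 * n / k) - 2 * y) :=
        mul_le_mul_of_nonpos_right (le_log_one_add_of_nonneg (by positivity)) hexp
    _ = _ := by
        have : 0 < 2 * n + k * y := by positivity
        field_simp
        ring

lemma log_one_sub_mul_le {k n y : ℝ} (hk : k ≠ 0) (hk2 : k ≠ 2) (hn : n ≠ 0)
    (hbase : 0 < 1 - 2 * k / (k - 2) * y / n) (hexp : 2 * y ≤ n - 2 * n / k) :
    log (1 - 2 * k / (k - 2) * y / n) * (-n + 2 * n / k + 2 * y) ≤ 2 * y := by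
  calc _ ≤ (1 - (1 - 2 * k / (k - 2) * y / n)⁻¹) * (-n + 2 * n / k + 2 * y) :=
        mul_le_mul_of_nonpos_right (one_sub_inv_le_log_of_pos hbase) (by linarith)
    _ = 2 * y := by
        have hk2' : k - 2 ≠ 0 := sub_ne_zero.mpr hk2
        have hu : (k - 2) * n - 2 * k * y ≠ 0 := by
          have := hbase.ne'
          field_simp at this
          exact (div_ne_zero_iff.mp this).1
        field_simp
        ring

lemma log_rpow_mul_rpow_le {k n y : ℝ} (hk : 2 < k) (hn : 0 < n) (hy : 0 ≤ y)
    (hbase : 0 < 1 - 2 * k / (k - 2) * y / n) (hexp : 2 * y ≤ n - 2 * n / k) :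
    log (1 + k * y / n) * (-(2 * n / k) - 2 * y)
      + log (1 - 2 * k / (k - 2) * y / n) * (-n + 2 * n / k + 2 * y)
      ≤ -(2 * k * y ^ 2 / (2 * n + k * y)) := by
  have hk0 : 0 < k := by linarith
  have h₁ := log_one_add_mul_le hk0 hn hy
  have h₂ := log_one_sub_mul_le hk0.ne' hk.ne' hn.ne' hbase hexp
  have : -(4 * y * (n + k * y) / (2 * n + k * y)) + 2 * y = -(2 * k * y ^ 2 / (2 * n + k * y)) := by
    have : 0 < 2 * n + k * y := by positivity
    field_simp
    ring
  linarith

lemma rpow_mul_rpow_le_exp {k n y : ℝ} (hk : 3 ≤ k) (hn : 0 < n) (hy : 0 ≤ y)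
    (hyn : 4 * k * y ≤ n) :
    0 < (1 + k * y / n) ^ (-(2 * n / k) - 2 * y)
        * (1 - 2 * k / (k - 2) * y / n) ^ (-n + 2 * n / k + 2 * y) ∧
      (1 + k * y / n) ^ (-(2 * n / k) - 2 * y)
        * (1 - 2 * k / (k - 2) * y / n) ^ (-n + 2 * n / k + 2 * y) ≤ exp (-(2 * (y ^ 2 / n))) := by
  have hk0 : 0 < k := by linarith
  have hbase₁ : 0 < 1 + k * y / n := by positivity
  have hbase₂ : 0 < 1 - 2 * k / (k - 2) * y / n := by
    have : 2 * k / (k - 2) * y / n ≤ 1 / 2 := by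
      rw [div_le_iff₀ hn, div_mul_eq_mul_div, div_le_iff₀ (by linarith)]
      nlinarith
    linarith
  have hexp : 2 * y ≤ n - 2 * n / k := by
    rw [le_sub_iff_add_le, ← le_sub_iff_add_le', div_le_iff₀ hk0]
    nlinarith
  refine ⟨by positivity, ?_⟩
  rw [rpow_def_of_pos hbase₁, rpow_def_of_pos hbase₂, ← exp_add, exp_le_exp]
  refine (log_rpow_mul_rpow_le (by linarith) hn hy hbase₂ hexp).trans ?_
  rw [neg_le_neg_iff, mul_div_assoc', div_le_div_iff₀ hn (by positivity)]
  have : 0 ≤ k * n - 2 * n - k * y := by nlinarith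
  nlinarith [mul_nonneg (sq_nonneg y) this]

theorem exp_bound_tendsto_zero (k : ℕ) (hk : 3 ≤ k) (ψ : ℕ → ℝ)
    (hψ : Tendsto ψ atTop atTop)
    (φ : ℕ → ℝ) (hφ : ∀ n, φ n = Real.sqrt (n * ψ n))
    (hφo : Tendsto (fun n => φ n / n) atTop (nhds 0)) :
    Tendsto (fun n : ℕ =>
        (1 + k * φ n / n) ^ (-(2 * (n : ℝ) / k) - 2 * φ n) *
          (1 - (2 * k / ((k : ℝ) - 2)) * φ n / n) ^ (-(n : ℝ) + 2 * (n : ℝ) / k + 2 * φ n))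
      atTop (nhds 0) := by
  have hk' : (3 : ℝ) ≤ k := by exact_mod_cast hk
  have hsmall : ∀ᶠ n : ℕ in atTop, φ n / n ≤ 1 / (4 * k) :=
    hφo.eventually (ge_mem_nhds (by positivity))
  have hbound := (hsmall.and ((eventually_gt_atTop 0).and (hψ.eventually_ge_atTop 0))).mono
    fun n ⟨hφn, hn₀, hψn⟩ => by
      have hn : (0 : ℝ) < n := by exact_mod_cast hn₀
      have hφψ : φ n ^ 2 / n = ψ n := by
        rw [hφ, sq_sqrt (by positivity)]
        field_simp
      rw [le_div_iff₀ (by positivity), div_mul_eq_mul_div, div_le_iff₀ hn] at hφn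
      have := rpow_mul_rpow_le_exp hk' hn (hφ n ▸ sqrt_nonneg _) (by linarith)
      rwa [hφψ] at this
  exact tendsto_of_tendsto_of_tendsto_of_le_of_le' tendsto_const_nhds
    (tendsto_exp_atBot.comp (tendsto_neg_atTop_atBot.comp (hψ.const_mul_atTop two_pos)))
    (hbound.mono fun _ h => h.1.le) (hbound.mono fun _ h => h.2)
end
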